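/- Let B³ ⊂ ℝ³ be the closed unit ball, let L = {(x,y,z) ∈ B³ : x² + y² ≤ 1/4}, and let q₃ : B³ → ℝP³ be the quotient map identifying antipodal points of ∂B³. Then the image R = q₃(L) is a solid torus, i.e. R is homeomorphic to S¹ × B². -/

import Mathlib

noncomputable section
open Metric Set

open Metric Set

abbrev USphere (n : ℕ) : Type :=
  (sphere (0 : EuclideanSpace ℝ (Fin (n+1))) 1 : Set (EuclideanSpace ℝ (Fin (n+1))))

def antipodalSetoid (n : ℕ) : Setoid (USphere n) where
  r x y := (x : EuclideanSpace ℝ (Fin (n+1))) = (y : EuclideanSpace ℝ (Fin (n+1)))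
    ∨ (x : EuclideanSpace ℝ (Fin (n+1))) = -(y : EuclideanSpace ℝ (Fin (n+1)))
  iseqv := by
    constructor
    · intro x; exact Or.inl rfl
    · rintro x y (h | h)
      · exact Or.inl h.symm
      · right; rw [h]; simp
    · rintro x y z (h1 | h1) (h2 | h2)
      · exact Or.inl (h1.trans h2)
      · right; rw [h1, h2]
      · right; rw [h1, h2]
      · left; rw [h1, h2]; simp

def RP (n : ℕ) : Type := Quotient (antipodalSetoid n)

instance (n : ℕ) : TopologicalSpace (RP n) := by unfold RP; infer_instance

/-- `K` is an absolute extensor of `X`: every continuous map into `K` defined on a closed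
subset of `X` extends to a continuous map on all of `X`. -/
def IsAbsoluteExtensor (X : Type*) [TopologicalSpace X] (K : Type*) [TopologicalSpace K] : Prop :=
  ∀ A : Set X, IsClosed A → ∀ f : C(A, K), ∃ g : C(X, K), ∀ a : A, g a = f a

/-- The covering projection from the sphere to projective space. -/
def pcov (n : ℕ) : USphere n → RP n := fun z => Quotient.mk (antipodalSetoid n) z

def coordIncl (n : ℕ) (x : EuclideanSpace ℝ (Fin (n+1))) : EuclideanSpace ℝ (Fin (n+2)) :=
  WithLp.toLp 2 (fun i : Fin (n+2) => if h : (i : ℕ) < n + 1 then x ⟨i, h⟩ else 0)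

lemma coordIncl_mem (n : ℕ) (x : USphere n) :
    coordIncl n (x : EuclideanSpace ℝ (Fin (n+1))) ∈
      sphere (0 : EuclideanSpace ℝ (Fin (n+2))) 1 := by
  obtain ⟨x, hx⟩ := x
  rw [mem_sphere_iff_norm, sub_zero, EuclideanSpace.norm_eq] at hx ⊢
  have h2 : ∑ i : Fin (n+2), ‖coordIncl n x i‖ ^ 2 = ∑ i : Fin (n+1), ‖x i‖ ^ 2 := by
    rw [Fin.sum_univ_castSucc]
    simp [coordIncl, Fin.is_lt, Fin.is_le]
  rw [h2]; exact hx

lemma coordIncl_neg (n : ℕ) (x : EuclideanSpace ℝ (Fin (n+1))) :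
    coordIncl n (-x) = -(coordIncl n x) := by
  ext i
  by_cases h : (i : ℕ) < n + 1 <;> simp [coordIncl, h] <;> split_ifs <;> simp

/-- The equatorial inclusion of spheres. -/
def sphereIncl (n : ℕ) : USphere n → USphere (n+1) :=
  fun x => ⟨coordIncl n (x : EuclideanSpace ℝ (Fin (n+1))), coordIncl_mem n x⟩

/-- The standard (equatorial) inclusion `ℝPⁿ → ℝP^(n+1)`. -/
def rpIncl (n : ℕ) : RP n → RP (n+1) :=
  Quotient.map' (sphereIncl n) (by
    rintro x y (h | h)
    · left; show coordIncl n _ = coordIncl n _; rw [h]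
    · right
      show coordIncl n (x : EuclideanSpace ℝ (Fin (n+1))) = -(coordIncl n _)
      rw [h, coordIncl_neg])
open Metric Set

/-- The real Hilbert space ℓ². -/
abbrev Hilbertl2 : Type := lp (fun _ : ℕ => ℝ) 2

def antipodalSetoidInf : Setoid (sphere (0 : Hilbertl2) 1 : Set Hilbertl2) where
  r x y := (x : Hilbertl2) = (y : Hilbertl2) ∨ (x : Hilbertl2) = -(y : Hilbertl2)
  iseqv := by
    constructor
    · intro x; exact Or.inl rfl
    · rintro x y (h | h)
      · exact Or.inl h.symm
      · right; rw [h]; simp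
    · rintro x y z (h1 | h1) (h2 | h2)
      · exact Or.inl (h1.trans h2)
      · right; rw [h1, h2]
      · right; rw [h1, h2]
      · left; rw [h1, h2]; simp

/-- Infinite real projective space: the quotient of the unit sphere of ℓ² by the
antipodal identification. -/
def RPInf : Type := Quotient antipodalSetoidInf

instance : TopologicalSpace RPInf := by unfold RPInf; infer_instance
abbrev UBall3 : Type := (closedBall (0 : EuclideanSpace ℝ (Fin 3)) 1 : Set (EuclideanSpace ℝ (Fin 3)))

def hemiLift (x : EuclideanSpace ℝ (Fin 3)) : EuclideanSpace ℝ (Fin 4) :=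
  WithLp.toLp 2 (fun i : Fin 4 => if h : (i : ℕ) < 3 then x ⟨i, h⟩ else Real.sqrt (1 - ‖x‖ ^ 2))

lemma hemiLift_mem (x : UBall3) :
    hemiLift (x : EuclideanSpace ℝ (Fin 3)) ∈ sphere (0 : EuclideanSpace ℝ (Fin 4)) 1 := by
  obtain ⟨x, hx⟩ := x
  rw [mem_closedBall, dist_zero_right] at hx
  have hx2 : ‖x‖ ^ 2 ≤ 1 := by nlinarith [norm_nonneg x]
  have hsum : ∑ i : Fin 3, ‖x i‖ ^ 2 = ‖x‖ ^ 2 := by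
    rw [EuclideanSpace.norm_eq, Real.sq_sqrt]
    positivity
  rw [mem_sphere_iff_norm, sub_zero, EuclideanSpace.norm_eq]
  have h2 : ∑ i : Fin 4, ‖hemiLift x i‖ ^ 2 = 1 := by
    rw [Fin.sum_univ_castSucc]
    have hlast : ‖hemiLift x (Fin.last 3)‖ ^ 2 = 1 - ‖x‖ ^ 2 := by
      simp only [hemiLift, Fin.last, PiLp.toLp_apply]
      rw [dif_neg (by norm_num)]
      rw [Real.norm_eq_abs, sq_abs, Real.sq_sqrt (by linarith)]
    have hcast : ∀ i : Fin 3, ‖hemiLift x (Fin.castSucc i)‖ ^ 2 = ‖x i‖ ^ 2 := by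
      intro i
      simp only [hemiLift, PiLp.toLp_apply]
      rw [dif_pos (by exact i.is_lt)]
      congr 1
    rw [hlast]
    rw [Finset.sum_congr rfl (fun i _ => hcast i), hsum]
    ring
  rw [h2, Real.sqrt_one]

/-- The quotient map `q₃ : B³ → ℝP³` (identify `B³` with the upper hemisphere of `S³`). -/
def q3 : UBall3 → RP 3 := fun x => pcov 3 ⟨hemiLift (x : EuclideanSpace ℝ (Fin 3)), hemiLift_mem x⟩

/-! ### The first modification of ℝP³ -/

/-- The disk of radius 1/3 (the meridian disk `D`). -/
abbrev DiskThird : Type :=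
  (closedBall (0 : EuclideanSpace ℝ (Fin 2)) (1/3) : Set (EuclideanSpace ℝ (Fin 2)))

/-- The parametrization of the solid torus `L ⊂ B³`, obtained by rotating the disk `D`
(of radius 1/3, centered at `(0,1/2,0)` in the yz-plane) about the z-axis. -/
def LparamE (s : USphere 1) (d : EuclideanSpace ℝ (Fin 2)) : EuclideanSpace ℝ (Fin 3) :=
  WithLp.toLp 2 (fun i : Fin 3 =>
    if i = 0 then -((s : EuclideanSpace ℝ (Fin 2)) 1) * (1/2 + d 0)
    else if i = 1 then ((s : EuclideanSpace ℝ (Fin 2)) 0) * (1/2 + d 0)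
    else d 1)

lemma circle_sq_sum (s : USphere 1) :
    ((s : EuclideanSpace ℝ (Fin 2)) 0) ^ 2 + ((s : EuclideanSpace ℝ (Fin 2)) 1) ^ 2 = 1 := by
  obtain ⟨s, hs⟩ := s
  rw [mem_sphere_iff_norm, sub_zero, EuclideanSpace.norm_eq] at hs
  have h0 : (0:ℝ) ≤ ∑ i : Fin 2, ‖s i‖ ^ 2 := by positivity
  have := Real.sq_sqrt h0
  rw [hs] at this
  rw [Fin.sum_univ_two] at this
  simpa [Real.norm_eq_abs, sq_abs] using this.symm

lemma disk_sq_sum (d : EuclideanSpace ℝ (Fin 2)) (hd : d ∈ closedBall (0 : EuclideanSpace ℝ (Fin 2)) (1/3)) :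
    (d 0) ^ 2 + (d 1) ^ 2 ≤ 1/9 := by
  rw [mem_closedBall, dist_zero_right, EuclideanSpace.norm_eq] at hd
  have h0 : (0:ℝ) ≤ ∑ i : Fin 2, ‖d i‖ ^ 2 := by positivity
  have h1 := Real.sq_sqrt h0
  have h2 : (∑ i : Fin 2, ‖d i‖ ^ 2) ≤ 1/9 := by
    nlinarith [Real.sqrt_nonneg (∑ i : Fin 2, ‖d i‖ ^ 2)]
  rw [Fin.sum_univ_two] at h2
  simpa [Real.norm_eq_abs, sq_abs] using h2

lemma LparamE_normsq (s : USphere 1) (d : EuclideanSpace ℝ (Fin 2))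
    (hd : d ∈ closedBall (0 : EuclideanSpace ℝ (Fin 2)) (1/3)) :
    ‖LparamE s d‖ ^ 2 ≤ 7/10 := by
  have hs := circle_sq_sum s
  have hdd := disk_sq_sum d hd
  have hd0 : (d 0) ^ 2 ≤ 1/9 := by nlinarith [sq_nonneg (d 1)]
  have hd0' : d 0 ≤ 1/3 := by nlinarith
  rw [EuclideanSpace.norm_eq, Real.sq_sqrt (by positivity)]
  rw [Fin.sum_univ_three]
  simp only [LparamE]
  norm_num [Fin.ext_iff]
  simp only [Real.norm_eq_abs, mul_pow, sq_abs]
  have key : ((s : EuclideanSpace ℝ (Fin 2)) 1) ^ 2 * (1/2 + d 0) ^ 2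
      + ((s : EuclideanSpace ℝ (Fin 2)) 0) ^ 2 * (1/2 + d 0) ^ 2 = (1/2 + d 0) ^ 2 := by
    linear_combination (1/2 + d 0) ^ 2 * hs
  nlinarith [sq_nonneg (d 1), sq_nonneg (1/2 + d 0)]

lemma LparamE_mem (s : USphere 1) (d : EuclideanSpace ℝ (Fin 2))
    (hd : d ∈ closedBall (0 : EuclideanSpace ℝ (Fin 2)) (1/3)) :
    LparamE s d ∈ closedBall (0 : EuclideanSpace ℝ (Fin 3)) 1 := by
  rw [mem_closedBall, dist_zero_right]
  have h := LparamE_normsq s d hd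
  nlinarith [norm_nonneg (LparamE s d)]

/-- The solid torus `L`, viewed as a subset of `ℝP³` (it misses the boundary sphere). -/
def LsetRP : Set (RP 3) :=
  {p | ∃ (s : USphere 1) (d : EuclideanSpace ℝ (Fin 2))
    (hd : d ∈ closedBall (0 : EuclideanSpace ℝ (Fin 2)) (1/3)),
      q3 ⟨LparamE s d, LparamE_mem s d hd⟩ = p}

/-- The point of the boundary circle `∂D` corresponding to `z ∈ S¹` under the standard
identification `ℝP¹ ≅ ∂D` (via the squaring map on the circle). -/
def bdPtE (z : USphere 1) : EuclideanSpace ℝ (Fin 2) :=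
  WithLp.toLp 2 (fun i : Fin 2 =>
    if i = 0 then (((z : EuclideanSpace ℝ (Fin 2)) 0) ^ 2 - ((z : EuclideanSpace ℝ (Fin 2)) 1) ^ 2) / 3
    else (2 * ((z : EuclideanSpace ℝ (Fin 2)) 0) * ((z : EuclideanSpace ℝ (Fin 2)) 1)) / 3)

lemma bdPtE_mem (z : USphere 1) : bdPtE z ∈ closedBall (0 : EuclideanSpace ℝ (Fin 2)) (1/3) := by
  have hz := circle_sq_sum z
  rw [mem_closedBall, dist_zero_right, EuclideanSpace.norm_eq]
  have h1 : ∑ i : Fin 2, ‖bdPtE z i‖ ^ 2 = (1/3 : ℝ) ^ 2 := by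
    rw [Fin.sum_univ_two]
    simp only [bdPtE]
    norm_num [Fin.ext_iff]
    simp only [div_pow, mul_pow, sq_abs]
    linear_combination ((((z : EuclideanSpace ℝ (Fin 2)) 0) ^ 2 + ((z : EuclideanSpace ℝ (Fin 2)) 1) ^ 2 + 1) / 9) * hz
  rw [h1, Real.sqrt_sq (by norm_num)]

lemma bdPtE_neg (z w : USphere 1)
    (h : (z : EuclideanSpace ℝ (Fin 2)) = -(w : EuclideanSpace ℝ (Fin 2))) :
    bdPtE z = bdPtE w := by
  ext i
  have h0 : (z : EuclideanSpace ℝ (Fin 2)) 0 = -((w : EuclideanSpace ℝ (Fin 2)) 0) := by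
    rw [h]; first | rfl | simp
  have h1 : (z : EuclideanSpace ℝ (Fin 2)) 1 = -((w : EuclideanSpace ℝ (Fin 2)) 1) := by
    rw [h]; first | rfl | simp
  simp only [bdPtE, h0, h1, PiLp.toLp_apply]
  ring_nf

/-- The attaching map `S¹ × ℝP¹ → ℝP³` onto the boundary `∂L` of the solid torus,
using the identification of `ℝP¹` with `∂D`. -/
def attachM1 (s : USphere 1) : RP 1 → RP 3 :=
  Quotient.lift (fun z : USphere 1 => q3 ⟨LparamE s (bdPtE z), LparamE_mem s (bdPtE z) (bdPtE_mem z)⟩)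
    (by
      rintro z w (h | h)
      · have : z = w := Subtype.ext h
        rw [this]
      · have : bdPtE z = bdPtE w := bdPtE_neg z w h
        simp only [this])

/-- The underlying type of the first modification `M₁` of `ℝP³`: the disjoint union of
`ℝP³` minus the interior of the solid torus `L` and of `S¹ × ℝP²`. -/
abbrev M1Carrier : Type := {p : RP 3 // p ∉ interior LsetRP} ⊕ (USphere 1 × RP 2)

/-- The gluing relation for the first modification: a boundary point `attachM1 s c ∈ ∂L`
is identified with the point `(s, c) ∈ S¹ × ℝP¹ ⊂ S¹ × ℝP²`. -/
def M1Rel : M1Carrier → M1Carrier → Prop := fun p q =>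
  ∃ (s : USphere 1) (c : RP 1) (h : attachM1 s c ∉ interior LsetRP),
    p = Sum.inl ⟨attachM1 s c, h⟩ ∧ q = Sum.inr (s, rpIncl 1 c)

/-- The first modification `M₁` of `ℝP³`: remove the interior of the solid torus `L` and
attach `S¹ × ℝP²` via the map `S¹ × ℝP¹ → ∂L`. -/
def M1 : Type := Quot M1Rel

instance : TopologicalSpace M1 := by unfold M1; infer_instance

lemma rpIncl_not_mem_LsetRP (c : RP 2) : rpIncl 2 c ∉ LsetRP := by
  rintro ⟨s, d, hd, heq⟩
  obtain ⟨y, rfl⟩ := Quotient.exists_rep c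
  have hmk : rpIncl 2 (Quotient.mk (antipodalSetoid 2) y)
      = Quotient.mk (antipodalSetoid 3) (sphereIncl 2 y) := rfl
  rw [hmk] at heq
  have heq' := Quotient.exact heq
  have hpos : 0 < Real.sqrt (1 - ‖LparamE s d‖ ^ 2) := by
    apply Real.sqrt_pos.mpr
    have := LparamE_normsq s d hd
    linarith
  have hlift3 : hemiLift (LparamE s d) 3 = Real.sqrt (1 - ‖LparamE s d‖ ^ 2) := by
    simp only [hemiLift, PiLp.toLp_apply]
    rw [dif_neg (by decide)]
  have hincl3 : (sphereIncl 2 y : EuclideanSpace ℝ (Fin 4)) 3 = 0 := by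
    show coordIncl 2 (y : EuclideanSpace ℝ (Fin 3)) 3 = 0
    simp only [coordIncl, PiLp.toLp_apply]
    rw [dif_neg (by decide)]
  rcases heq' with h | h
  · have h3' : hemiLift (LparamE s d) 3 = (sphereIncl 2 y : EuclideanSpace ℝ (Fin 4)) 3 :=
      congrFun (congrArg WithLp.ofLp h) (3 : Fin 4)
    rw [hlift3, hincl3] at h3'
    linarith
  · have h3' : hemiLift (LparamE s d) 3 = -((sphereIncl 2 y : EuclideanSpace ℝ (Fin 4)) 3) :=
      by simpa using congrArg (fun v : EuclideanSpace ℝ (Fin 4) => v 3) h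
    rw [hlift3, hincl3, neg_zero] at h3'
    linarith

lemma rpIncl_not_mem_interior_LsetRP (c : RP 2) : rpIncl 2 c ∉ interior LsetRP :=
  fun h => rpIncl_not_mem_LsetRP c (interior_subset h)

/-- The copy of the projective plane `ℝP² = q₃(∂B³)` inside the first modification `M₁`. -/
def rp2ToM1 : RP 2 → M1 :=
  fun c => Quot.mk M1Rel (Sum.inl ⟨rpIncl 2 c, rpIncl_not_mem_interior_LsetRP c⟩)

/-! ### The second modification of ℝP³ -/

/-- The solid torus `R = q₃(L) ⊂ ℝP³`, where `L ⊂ B³` is the cylinder `x² + y² ≤ 1/4`. -/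
def RsetRP : Set (RP 3) :=
  {p | ∃ x : UBall3, ((x : EuclideanSpace ℝ (Fin 3)) 0) ^ 2 + ((x : EuclideanSpace ℝ (Fin 3)) 1) ^ 2 ≤ 1/4
        ∧ q3 x = p}

/-- The copy of `ℝP² = q₃(∂B³)` inside `ℝP³`. -/
def RP2in3 : Set (RP 3) := Set.range (rpIncl 2)

/-- The disk `D = R ∩ ℝP²`. -/
def DsetM2 : Set (RP 3) := RsetRP ∩ RP2in3

/-- The boundary circle `∂D = D ∩ ∂R` of the disk `D`. -/
def bdDM2 : Set (RP 3) := DsetM2 ∩ frontier RsetRP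

/-- The subspace `T = S¹ × ℝP² ∪ {a} × ℝP³` of `S¹ × ℝP³`. -/
def TSpace (a : USphere 1) : Type :=
  {p : USphere 1 × RP 3 // (∃ c : RP 2, p.2 = rpIncl 2 c) ∨ p.1 = a}

instance (a : USphere 1) : TopologicalSpace (TSpace a) := by unfold TSpace; infer_instance

/-- The projection `π : T → S¹` onto the first coordinate. -/
def TProj (a : USphere 1) : C(TSpace a, USphere 1) :=
  ⟨fun p => p.val.1, by exact (continuous_fst.comp continuous_subtype_val)⟩

/-- The underlying type of the second modification `M₂` of `ℝP³`. -/
abbrev M2Carrier (a : USphere 1) : Type := {p : RP 3 // p ∉ interior RsetRP} ⊕ (TSpace a)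

/-- The gluing relation for the second modification, relative to a solid-torus structure
`φ : S¹ × D ≃ₜ R` on `R` and an identification `ψ : ∂D ≃ₜ ℝP¹`: a point `φ(s,d) ∈ ∂R` is
identified with the point `(s, ψ d) ∈ S¹ × ℝP¹ ⊂ S¹ × ℝP² ⊂ T`. -/
def M2Rel (a : USphere 1) (φ : (USphere 1 × ↥DsetM2) ≃ₜ ↥RsetRP) (ψ : ↥bdDM2 ≃ₜ RP 1) :
    M2Carrier a → M2Carrier a → Prop := fun p q =>
  ∃ (s : USphere 1) (d : ↥bdDM2) (h : (φ (s, ⟨d.val, d.prop.1⟩)).val ∉ interior RsetRP),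
    p = Sum.inl ⟨(φ (s, ⟨d.val, d.prop.1⟩)).val, h⟩ ∧
    q = Sum.inr ⟨(s, rpIncl 2 (rpIncl 1 (ψ d))), Or.inl ⟨rpIncl 1 (ψ d), rfl⟩⟩

/-- The second modification `M₂` of `ℝP³`: remove the interior of the solid torus `R` and
attach `S¹ × ℝP² ∪ {a} × ℝP³` via the inclusion `∂R = S¹ × ∂D → S¹ × ℝP² ∪ {a} × ℝP³`. -/
def M2 (a : USphere 1) (φ : (USphere 1 × ↥DsetM2) ≃ₜ ↥RsetRP) (ψ : ↥bdDM2 ≃ₜ RP 1) : Type :=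
  Quot (M2Rel a φ ψ)

instance (a : USphere 1) (φ : (USphere 1 × ↥DsetM2) ≃ₜ ↥RsetRP) (ψ : ↥bdDM2 ≃ₜ RP 1) :
    TopologicalSpace (M2 a φ ψ) := by unfold M2; infer_instance

/-!
Work on `S³ ⊂ ℂ²`, where `q₃` is the antipodal quotient composed with the upper-hemisphere lift.
`R` is then the image of the solid torus `T = {(w, ζ) ∈ S³ : ‖w‖ ≤ 1/2}`, since `T` is the lift of
`L` together with its antipodal image. With `σ = ζ / ‖ζ‖`, the map `(w, ζ) ↦ (σ², 2 w σ̄)` sends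
`T` continuously onto `S¹ × B²` and identifies exactly the antipodal pairs. As `T` is compact and
`ℝP³` is Hausdorff, both `R` and `S¹ × B²` are the quotient of `T` by the antipodal map.
-/

open Complex ComplexConjugate Topology

local notation "ℝ³" => EuclideanSpace ℝ (Fin 3)
local notation "ℝ⁴" => EuclideanSpace ℝ (Fin 4)

theorem eq_or_eq_neg_of_inner_smul_self_eq {E : Type*} [NormedAddCommGroup E]
    [InnerProductSpace ℝ E] {p q : E} (hp : ‖p‖ = 1) (hq : ‖q‖ = 1)
    (h : ∀ v, inner ℝ p v • p = inner ℝ q v • q) : p = q ∨ p = -q := by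
  have hpq : p = inner ℝ q p • q := by simpa [real_inner_self_eq_norm_sq, hp] using h p
  have hc : |inner ℝ q p| = 1 := by
    have := congrArg norm hpq
    rwa [norm_smul, hq, hp, mul_one, Real.norm_eq_abs, eq_comm] at this
  rcases abs_eq zero_le_one |>.mp hc with hc | hc
  · exact .inl (by simpa [hc] using hpq)
  · exact .inr (by simpa [hc] using hpq)

def RP.orthogonalProjection (n : ℕ) :
    RP n → EuclideanSpace ℝ (Fin (n + 1)) → EuclideanSpace ℝ (Fin (n + 1)) :=
  Quotient.lift (fun p v => inner ℝ p.1 v • p.1) <| by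
    rintro p q (h | h) <;> funext v <;> simp [h]

theorem RP.orthogonalProjection_injective (n : ℕ) :
    Function.Injective (RP.orthogonalProjection n) := by
  rintro ⟨p⟩ ⟨q⟩ h
  exact Quotient.sound <| eq_or_eq_neg_of_inner_smul_self_eq (norm_eq_of_mem_sphere p)
    (norm_eq_of_mem_sphere q) (congrFun h)

theorem RP.continuous_orthogonalProjection (n : ℕ) : Continuous (RP.orthogonalProjection n) :=
  continuous_quot_lift _ <| continuous_pi fun v => by fun_prop

instance (n : ℕ) : T2Space (RP n) :=
  .of_injective_continuous (RP.orthogonalProjection_injective n)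
    (RP.continuous_orthogonalProjection n)

theorem pcov_eq_pcov_iff {n : ℕ} {p q : USphere n} :
    pcov n p = pcov n q ↔
      (p : EuclideanSpace ℝ (Fin (n + 1))) = q ∨ (p : EuclideanSpace ℝ (Fin (n + 1))) = -q :=
  Quotient.eq (r := antipodalSetoid n)

def Topology.IsQuotientMap.homeomorphOfKerEq {X Y Z : Type*} [TopologicalSpace X]
    [TopologicalSpace Y] [TopologicalSpace Z] {f : X → Y} {g : X → Z}
    (hf : IsQuotientMap f) (hg : IsQuotientMap g) (h : Setoid.ker f = Setoid.ker g) : Y ≃ₜ Z :=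
  let e : Quotient (Setoid.ker f) ≃ₜ Y := hf.homeomorph (f := ⟨f, hf.continuous⟩)
  (h ▸ e : Quotient (Setoid.ker g) ≃ₜ Y).symm.trans (hg.homeomorph (f := ⟨g, hg.continuous⟩))

section SolidTorusCoord

def solidTorusCoord (w ζ : ℂ) : ℂ × ℂ :=
  ((ζ / ‖ζ‖) ^ 2, 2 * w * conj (ζ / ‖ζ‖))

variable {w w' ζ ζ' : ℂ}

theorem solidTorusCoord_neg (w ζ : ℂ) : solidTorusCoord (-w) (-ζ) = solidTorusCoord w ζ := by
  simp [solidTorusCoord, neg_div]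

theorem norm_solidTorusCoord_fst (hζ : ζ ≠ 0) : ‖(solidTorusCoord w ζ).1‖ = 1 := by
  simp [solidTorusCoord, hζ]

theorem norm_solidTorusCoord_snd (hζ : ζ ≠ 0) : ‖(solidTorusCoord w ζ).2‖ = 2 * ‖w‖ := by
  simp [solidTorusCoord, hζ]

theorem eq_or_eq_neg_of_solidTorusCoord_eq (hζ : ζ ≠ 0) (hζ' : ζ' ≠ 0)
    (hn : ‖w‖ ^ 2 + ‖ζ‖ ^ 2 = ‖w'‖ ^ 2 + ‖ζ'‖ ^ 2)
    (h : solidTorusCoord w ζ = solidTorusCoord w' ζ') :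
    (w = w' ∧ ζ = ζ') ∨ (w = -w' ∧ ζ = -ζ') := by
  set σ := ζ / ‖ζ‖ with hσ
  set σ' := ζ' / ‖ζ'‖ with hσ'
  obtain ⟨hsq, hdisk⟩ := Prod.ext_iff.mp h
  have hw : ‖w‖ = ‖w'‖ := by
    simpa [norm_solidTorusCoord_snd hζ, norm_solidTorusCoord_snd hζ'] using congrArg norm hdisk
  have hnζ : ‖ζ‖ = ‖ζ'‖ := by
    rw [hw] at hn
    exact (pow_left_inj₀ (norm_nonneg _) (norm_nonneg _) two_ne_zero).mp (by linarith)
  have hζσ : ζ = σ * ‖ζ‖ := by rw [hσ, div_mul_cancel₀]; simpa using hζ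
  have hζσ' : ζ' = σ' * ‖ζ'‖ := by rw [hσ', div_mul_cancel₀]; simpa using hζ'
  have hσ0 : conj σ ≠ 0 := by simpa [hσ] using hζ
  simp only [solidTorusCoord, ← hσ, ← hσ'] at hsq hdisk
  rcases sq_eq_sq_iff_eq_or_eq_neg.mp hsq with hs | hs
  · refine .inl ⟨?_, by rw [hζσ, hζσ', hs, hnζ]⟩
    rw [← hs] at hdisk
    exact mul_right_cancel₀ hσ0 (mul_left_cancel₀ two_ne_zero (by linear_combination hdisk))
  · refine .inr ⟨?_, by rw [hζσ, hζσ', hs, hnζ, neg_mul]⟩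
    rw [show σ' = -σ by rw [hs, neg_neg], map_neg] at hdisk
    exact mul_right_cancel₀ hσ0 (mul_left_cancel₀ two_ne_zero (by linear_combination hdisk))

theorem exists_solidTorusCoord_eq {s v : ℂ} (hs : ‖s‖ = 1) (hv : ‖v‖ ≤ 1) :
    ∃ w ζ, ‖w‖ ^ 2 ≤ 1 / 4 ∧ ‖w‖ ^ 2 + ‖ζ‖ ^ 2 = 1 ∧ solidTorusCoord w ζ = (s, v) := by
  obtain ⟨σ, rfl⟩ := IsAlgClosed.exists_pow_nat_eq s two_pos
  have hσ : ‖σ‖ = 1 := by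
    simpa using (pow_left_inj₀ (norm_nonneg σ) zero_le_one two_ne_zero).mp (by simpa using hs)
  set w := v * σ / 2
  have hw : ‖w‖ ^ 2 ≤ 1 / 4 := by
    have : ‖w‖ = ‖v‖ / 2 := by simp [w, hσ]
    rw [this]
    nlinarith [norm_nonneg v]
  set r := √(1 - ‖w‖ ^ 2)
  have hr : 0 < r := Real.sqrt_pos.mpr (by linarith)
  have hζ : ‖σ * r‖ = r := by simp [hσ, hr.le]
  refine ⟨w, σ * r, hw, ?_, ?_⟩
  · rw [hζ, Real.sq_sqrt (by linarith)]; ring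
  · have hdir : σ * r / ‖σ * r‖ = σ := by
      rw [hζ]; exact mul_div_cancel_right₀ σ (by exact_mod_cast hr.ne')
    have hσσ : σ * conj σ = 1 := by
      rw [Complex.mul_conj, Complex.normSq_eq_norm_sq, hσ]; norm_num
    simp only [solidTorusCoord, hdir, w, Prod.mk.injEq, true_and]
    linear_combination v * hσσ

end SolidTorusCoord

section ComplexPair

def toComplexPair (p : ℝ⁴) : ℂ × ℂ := (p 0 + p 1 * I, p 2 + p 3 * I)

def ofComplexPair (z : ℂ × ℂ) : ℝ⁴ := !₂[z.1.re, z.1.im, z.2.re, z.2.im]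

theorem toComplexPair_ofComplexPair (z : ℂ × ℂ) : toComplexPair (ofComplexPair z) = z := by
  simp [toComplexPair, ofComplexPair]

theorem ofComplexPair_toComplexPair (p : ℝ⁴) : ofComplexPair (toComplexPair p) = p := by
  ext i; fin_cases i <;> simp [toComplexPair, ofComplexPair]

theorem toComplexPair_injective : Function.Injective toComplexPair :=
  Function.LeftInverse.injective ofComplexPair_toComplexPair

theorem toComplexPair_neg (p : ℝ⁴) : toComplexPair (-p) = -toComplexPair p := by
  ext <;> simp only [toComplexPair, PiLp.neg_apply, ofReal_neg, Prod.fst_neg, Prod.snd_neg] <;> ring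

theorem norm_sq_toComplexPair_fst (p : ℝ⁴) : ‖(toComplexPair p).1‖ ^ 2 = p 0 ^ 2 + p 1 ^ 2 := by
  simp [toComplexPair, Complex.sq_norm, Complex.normSq_add_mul_I]

theorem norm_sq_eq_toComplexPair (p : ℝ⁴) :
    ‖p‖ ^ 2 = ‖(toComplexPair p).1‖ ^ 2 + ‖(toComplexPair p).2‖ ^ 2 := by
  simp only [EuclideanSpace.real_norm_sq_eq, Fin.sum_univ_four, toComplexPair, Complex.sq_norm,
    normSq_add_mul_I]
  ring

theorem continuous_toComplexPair : Continuous toComplexPair := by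
  unfold toComplexPair; fun_prop

end ComplexPair

section SolidTorusInS3

def solidTorusS3 : Set (USphere 3) := {p | (p : ℝ⁴) 0 ^ 2 + (p : ℝ⁴) 1 ^ 2 ≤ 1 / 4}

instance : CompactSpace solidTorusS3 :=
  isCompact_iff_compactSpace.mp (isClosed_le (by fun_prop) continuous_const).isCompact

theorem norm_sq_add_norm_sq_toComplexPair (p : USphere 3) :
    ‖(toComplexPair p).1‖ ^ 2 + ‖(toComplexPair p).2‖ ^ 2 = 1 := by
  rw [← norm_sq_eq_toComplexPair, norm_eq_of_mem_sphere p, one_pow]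

theorem toComplexPair_snd_ne_zero (p : solidTorusS3) : (toComplexPair p).2 ≠ 0 := by
  intro h0
  have hp : (p : ℝ⁴) 0 ^ 2 + (p : ℝ⁴) 1 ^ 2 ≤ 1 / 4 := p.2
  have h := norm_sq_add_norm_sq_toComplexPair p
  rw [norm_sq_toComplexPair_fst, h0, norm_zero] at h
  linarith

def solidTorusS3Coord (p : solidTorusS3) : sphere (0 : ℂ) 1 × closedBall (0 : ℂ) 1 :=
  let c := solidTorusCoord (toComplexPair p).1 (toComplexPair p).2
  (⟨c.1, by simp [c, norm_solidTorusCoord_fst (toComplexPair_snd_ne_zero p)]⟩,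
   ⟨c.2, by
      have hw : ‖(toComplexPair p).1‖ ^ 2 ≤ 1 / 4 := by
        rw [norm_sq_toComplexPair_fst]; exact p.2
      rw [mem_closedBall_zero_iff, norm_solidTorusCoord_snd (toComplexPair_snd_ne_zero p)]
      nlinarith [norm_nonneg (toComplexPair p).1]⟩)

theorem continuous_solidTorusS3Coord : Continuous solidTorusS3Coord := by
  have hc : Continuous fun p : solidTorusS3 => toComplexPair p :=
    continuous_toComplexPair.comp (continuous_subtype_val.comp continuous_subtype_val)
  have hσ : Continuous fun p : solidTorusS3 => (toComplexPair p).2 / ‖(toComplexPair p).2‖ :=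
    hc.snd.div (by fun_prop) fun p => by simpa using toComplexPair_snd_ne_zero p
  have h : Continuous fun p : solidTorusS3 =>
      solidTorusCoord (toComplexPair p).1 (toComplexPair p).2 := by
    unfold solidTorusCoord; fun_prop
  exact (h.fst.subtype_mk _).prodMk (h.snd.subtype_mk _)

theorem solidTorusS3Coord_eq_iff {p q : solidTorusS3} :
    solidTorusS3Coord p = solidTorusS3Coord q ↔ pcov 3 p = pcov 3 q := by
  have hcoord : solidTorusS3Coord p = solidTorusS3Coord q ↔
      solidTorusCoord (toComplexPair p).1 (toComplexPair p).2 =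
        solidTorusCoord (toComplexPair q).1 (toComplexPair q).2 := by
    simp [solidTorusS3Coord, Prod.ext_iff, Subtype.ext_iff]
  rw [hcoord, pcov_eq_pcov_iff]
  constructor
  · intro h
    rcases eq_or_eq_neg_of_solidTorusCoord_eq (toComplexPair_snd_ne_zero p)
      (toComplexPair_snd_ne_zero q) (by rw [norm_sq_add_norm_sq_toComplexPair,
        norm_sq_add_norm_sq_toComplexPair]) h with ⟨h1, h2⟩ | ⟨h1, h2⟩
    · exact .inl (toComplexPair_injective (Prod.ext h1 h2))
    · exact .inr (toComplexPair_injective (by rw [toComplexPair_neg]; exact Prod.ext h1 h2))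
  · rintro (h | h) <;> rw [h]
    rw [toComplexPair_neg, Prod.fst_neg, Prod.snd_neg, solidTorusCoord_neg]

theorem solidTorusS3Coord_surjective : Function.Surjective solidTorusS3Coord := by
  rintro ⟨⟨s, hs⟩, ⟨v, hv⟩⟩
  obtain ⟨w, ζ, hw, hn, h⟩ := exists_solidTorusCoord_eq (mem_sphere_zero_iff_norm.mp hs)
    (mem_closedBall_zero_iff.mp hv)
  set p := ofComplexPair (w, ζ)
  have hp : toComplexPair p = (w, ζ) := toComplexPair_ofComplexPair _
  have hp1 : p ∈ sphere (0 : ℝ⁴) 1 := by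
    rw [mem_sphere_zero_iff_norm, ← pow_eq_one_iff_of_nonneg (norm_nonneg p) two_ne_zero,
      norm_sq_eq_toComplexPair, hp, hn]
  have hpT : ⟨p, hp1⟩ ∈ solidTorusS3 := by
    show p 0 ^ 2 + p 1 ^ 2 ≤ 1 / 4
    rw [← norm_sq_toComplexPair_fst, hp]; exact hw
  refine ⟨⟨⟨p, hp1⟩, hpT⟩, ?_⟩
  simp [solidTorusS3Coord, hp, h]

end SolidTorusInS3

theorem exists_hemiLift_eq_or_eq_neg (p : USphere 3) :
    ∃ x : UBall3, hemiLift x = p ∨ hemiLift x = -p := by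
  suffices key : ∀ p : ℝ⁴, ‖p‖ = 1 → 0 ≤ p 3 → ∃ x : UBall3, hemiLift x = p by
    rcases le_total 0 ((p : ℝ⁴) 3) with h | h
    · obtain ⟨x, hx⟩ := key p (norm_eq_of_mem_sphere p) h
      exact ⟨x, .inl hx⟩
    · obtain ⟨x, hx⟩ := key (-p) (by simp [norm_eq_of_mem_sphere p]) (by simpa using h)
      exact ⟨x, .inr hx⟩
  intro p hp h3
  have hx : ‖(!₂[p 0, p 1, p 2] : ℝ³)‖ ^ 2 = 1 - p 3 ^ 2 := by
    have h := EuclideanSpace.real_norm_sq_eq p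
    rw [hp, Fin.sum_univ_four] at h
    rw [EuclideanSpace.real_norm_sq_eq, Fin.sum_univ_three]
    simp only [Matrix.cons_val_zero, Matrix.cons_val_one, Matrix.cons_val]
    linarith
  refine ⟨⟨!₂[p 0, p 1, p 2], ?_⟩, ?_⟩
  · rw [mem_closedBall_zero_iff]
    nlinarith [norm_nonneg (!₂[p 0, p 1, p 2] : ℝ³)]
  · ext i; fin_cases i <;> simp [hemiLift, hx, Real.sqrt_sq h3]

theorem RsetRP_eq_image_pcov : RsetRP = pcov 3 '' solidTorusS3 := by
  ext r
  constructor
  · rintro ⟨x, hx, rfl⟩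
    refine ⟨⟨hemiLift x, hemiLift_mem x⟩, ?_, rfl⟩
    show (hemiLift x) 0 ^ 2 + (hemiLift x) 1 ^ 2 ≤ 1 / 4
    simpa [hemiLift] using hx
  · rintro ⟨p, hp, rfl⟩
    obtain ⟨x, hx⟩ := exists_hemiLift_eq_or_eq_neg p
    refine ⟨x, ?_, Quotient.sound hx⟩
    have h0 : (x : ℝ³) 0 = hemiLift x 0 := by simp [hemiLift]
    have h1 : (x : ℝ³) 1 = hemiLift x 1 := by simp [hemiLift]
    have hp : (p : ℝ⁴) 0 ^ 2 + (p : ℝ⁴) 1 ^ 2 ≤ 1 / 4 := hp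
    rcases hx with hx | hx <;> simpa [h0, h1, hx] using hp

def circleProdDiskHomeomorph :
    sphere (0 : ℂ) 1 × closedBall (0 : ℂ) 1 ≃ₜ
      USphere 1 × closedBall (0 : EuclideanSpace ℝ (Fin 2)) 1 :=
  let e := Complex.orthonormalBasisOneI.repr.toHomeomorph
  (e.subtype fun z => by simp [e]).prodCongr (e.subtype fun z => by simp [e])

/-- The image `R = q₃(L)` of the cylinder `L = {(x,y,z) ∈ B³ : x² + y² ≤ 1/4}` under the
quotient map `q₃ : B³ → ℝP³` is a solid torus, i.e. homeomorphic to `S¹ × B²`. -/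
theorem R_homeomorphic_to_solid_torus :
    Nonempty (↥RsetRP ≃ₜ
      (USphere 1 ×
        (closedBall (0 : EuclideanSpace ℝ (Fin 2)) 1 : Set (EuclideanSpace ℝ (Fin 2))))) := by
  let f := solidTorusS3.imageFactorization (pcov 3)
  have hf : IsQuotientMap f := .of_surjective_continuous imageFactorization_surjective
    ((continuous_quotient_mk'.comp continuous_subtype_val).subtype_mk _)
  have hg : IsQuotientMap solidTorusS3Coord :=
    .of_surjective_continuous solidTorusS3Coord_surjective continuous_solidTorusS3Coord
  have hker : Setoid.ker f = Setoid.ker solidTorusS3Coord := Setoid.ext fun p q => by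
    simp [Setoid.ker_def, f, imageFactorization, solidTorusS3Coord_eq_iff]
  exact ⟨(Homeomorph.setCongr RsetRP_eq_image_pcov).trans
    ((hf.homeomorphOfKerEq hg hker).trans circleProdDiskHomeomorph)⟩
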